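/- Define f(P) = Q(√D (ln(1+gP) − R_c ln 2)) for P ≥ 0, with constants D > 0, g > 0, R_c > 0. Then the second derivative of f at P has the same sign as D(ln(1+gP) − R_c ln 2) + 1; in particular f''(P) ≥ 0 if and only if R_c ≤ log₂(1+gP) + (1/D) log₂ e. -/

import Mathlib

/-!
With φ the standard normal density, Q' = -φ and φ'(x) = -x φ(x), so the chain rule gives
(Q ∘ u)'' = φ(u) (u u'² - u''). For u(P) = √D L(P) with L(P) = ln(1 + gP) - R_c ln 2 one has
u' = √D g / (1 + gP) and u'' = -√D g² / (1 + gP)², hence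
(Q ∘ u)'' = φ(u) √D (g / (1 + gP))² (D L(P) + 1), a positive multiple of D L(P) + 1.
-/

noncomputable def Qfun (x : ℝ) : ℝ :=
  (1 / Real.sqrt (2 * Real.pi)) * ∫ t in Set.Ioi x, Real.exp (-t^2 / 2)

open MeasureTheory ProbabilityTheory Real Set Filter Topology

theorem hasDerivAt_integral_Ioi {E : Type*} [NormedAddCommGroup E] [NormedSpace ℝ E]
    [CompleteSpace E] {f : ℝ → E} (hf : Integrable f) (hc : Continuous f) (x : ℝ) :
    HasDerivAt (fun y => ∫ t in Ioi y, f t) (-f x) x := by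
  have htail : (fun y => ∫ t in Ioi y, f t)
      = fun y => (∫ t in Ioi 0, f t) - ∫ t in (0 : ℝ)..y, f t := by
    funext y
    rw [← intervalIntegral.integral_Ioi_sub_Ioi' hf.integrableOn hf.integrableOn, sub_sub_cancel]
  rw [htail]
  exact (hc.integral_hasStrictDerivAt 0 x).hasDerivAt.const_sub _

theorem gaussianPDFReal_zero_one (x : ℝ) :
    gaussianPDFReal 0 1 x = (1 / √(2 * π)) * exp (-x ^ 2 / 2) := by
  simp [gaussianPDFReal]

theorem Qfun_eq_integral_gaussianPDFReal (x : ℝ) :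
    Qfun x = ∫ t in Ioi x, gaussianPDFReal 0 1 t := by
  simp only [gaussianPDFReal_zero_one, integral_const_mul, Qfun]

theorem continuous_gaussianPDFReal_zero_one : Continuous (gaussianPDFReal 0 1) := by
  simp only [funext gaussianPDFReal_zero_one]
  fun_prop

theorem hasDerivAt_Qfun (x : ℝ) : HasDerivAt Qfun (-gaussianPDFReal 0 1 x) x := by
  simp only [funext Qfun_eq_integral_gaussianPDFReal]
  exact hasDerivAt_integral_Ioi (integrable_gaussianPDFReal 0 1)
    continuous_gaussianPDFReal_zero_one x

theorem hasDerivAt_gaussianPDFReal_zero_one (x : ℝ) :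
    HasDerivAt (gaussianPDFReal 0 1) (-x * gaussianPDFReal 0 1 x) x := by
  simp only [funext gaussianPDFReal_zero_one]
  refine ((((hasDerivAt_id' x).pow 2).neg.div_const 2).exp.const_mul _).congr_deriv ?_
  simp only [Pi.neg_apply, Pi.pow_apply]
  ring

theorem hasDerivAt_deriv_Qfun_comp {u u' : ℝ → ℝ} {u'' x : ℝ}
    (hu : ∀ᶠ y in 𝓝 x, HasDerivAt u (u' y) y) (hu' : HasDerivAt u' u'' x) :
    HasDerivAt (deriv fun y => Qfun (u y))
      (gaussianPDFReal 0 1 (u x) * (u x * u' x ^ 2 - u'')) x := by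
  have hderiv : deriv (fun y => Qfun (u y))
      =ᶠ[𝓝 x] fun y => -gaussianPDFReal 0 1 (u y) * u' y := by
    filter_upwards [hu] with y hy
    exact ((hasDerivAt_Qfun (u y)).comp y hy).deriv
  have hφu := (hasDerivAt_gaussianPDFReal_zero_one (u x)).comp x hu.self_of_nhds
  refine ((hφu.neg.mul hu').congr_of_eventuallyEq hderiv).congr_deriv ?_
  simp only [Pi.neg_apply, Function.comp_apply]
  ring

theorem hasDerivAt_log_one_add_mul {g y : ℝ} (h : 1 + g * y ≠ 0) :
    HasDerivAt (fun y => log (1 + g * y)) (g / (1 + g * y)) y := by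
  simpa using (((hasDerivAt_id y).const_mul g).const_add 1).log h

theorem hasDerivAt_div_one_add_mul {g y : ℝ} (h : 1 + g * y ≠ 0) :
    HasDerivAt (fun y => g / (1 + g * y)) (-(g / (1 + g * y)) ^ 2) y := by
  simp only [div_eq_mul_inv]
  refine ((((hasDerivAt_id' y).const_mul g).const_add 1).inv h).const_mul g |>.congr_deriv ?_
  field_simp

theorem deriv_deriv_Qfun_comp_log {s g c P : ℝ} (hP : 1 + g * P ≠ 0) :
    deriv (deriv fun y => Qfun (s * (log (1 + g * y) - c))) P
      = gaussianPDFReal 0 1 (s * (log (1 + g * P) - c)) * s * (g / (1 + g * P)) ^ 2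
        * (s ^ 2 * (log (1 + g * P) - c) + 1) := by
  have hu : ∀ᶠ y in 𝓝 P, HasDerivAt (fun y => s * (log (1 + g * y) - c))
      (s * (g / (1 + g * y))) y := by
    have hopen : IsOpen {y : ℝ | 1 + g * y ≠ 0} := isOpen_ne_fun (by fun_prop) continuous_const
    filter_upwards [hopen.mem_nhds hP] with y hy
    exact ((hasDerivAt_log_one_add_mul hy).sub_const c).const_mul s
  rw [(hasDerivAt_deriv_Qfun_comp hu ((hasDerivAt_div_one_add_mul hP).const_mul s)).deriv]
  ring

theorem Real.sign_mul_of_pos {a : ℝ} (ha : 0 < a) (b : ℝ) :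
    Real.sign (a * b) = Real.sign b := by
  rcases lt_trichotomy b 0 with hb | rfl | hb
  · rw [sign_of_neg hb, sign_of_neg (mul_neg_of_pos_of_neg ha hb)]
  · rw [mul_zero]
  · rw [sign_of_pos hb, sign_of_pos (mul_pos ha hb)]

theorem le_logb_add_one_div_mul_logb_exp_iff {b D x c : ℝ} (hb : 1 < b) (hD : 0 < D) :
    c ≤ logb b x + (1 / D) * logb b (exp 1) ↔ 0 ≤ D * (log x - c * log b) + 1 := by
  have hlogb : 0 < log b := log_pos hb
  rw [logb, logb, log_exp, ← sub_nonneg]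
  have : log x / log b + 1 / D * (1 / log b) - c
      = (D * (log x - c * log b) + 1) / (D * log b) := by
    field_simp; ring
  rw [this, le_div_iff₀ (by positivity), zero_mul]

theorem second_deriv_sign_general (D g Rc : ℝ) (hD : 0 < D) (hg : 0 < g) :
    ∀ P : ℝ, 0 ≤ P →
      (Real.sign (deriv (deriv (fun P' : ℝ =>
          Qfun (Real.sqrt D * (Real.log (1 + g * P') - Rc * Real.log 2)))) P)
        = Real.sign (D * (Real.log (1 + g * P) - Rc * Real.log 2) + 1)) ∧
      (0 ≤ deriv (deriv (fun P' : ℝ =>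
          Qfun (Real.sqrt D * (Real.log (1 + g * P') - Rc * Real.log 2)))) P
        ↔ Rc ≤ Real.logb 2 (1 + g * P) + (1 / D) * Real.logb 2 (Real.exp 1)) := by
  intro P hP
  have hgain : 0 < 1 + g * P := by positivity
  rw [deriv_deriv_Qfun_comp_log hgain.ne', sq_sqrt hD.le]
  have hfactor : 0 < gaussianPDFReal 0 1 (√D * (log (1 + g * P) - Rc * log 2)) * √D
      * (g / (1 + g * P)) ^ 2 := by
    have := gaussianPDFReal_pos 0 1 (√D * (log (1 + g * P) - Rc * log 2)) one_ne_zero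
    positivity
  exact ⟨Real.sign_mul_of_pos hfactor _, (mul_nonneg_iff_of_pos_left hfactor).trans
    (le_logb_add_one_div_mul_logb_exp_iff one_lt_two hD).symm⟩

theorem second_deriv_sign (D g Rc : ℝ) (hD : 0 < D) (hg : 0 < g) (hRc : 0 < Rc) :
    ∀ P : ℝ, 0 ≤ P →
      (Real.sign (deriv (deriv (fun P' : ℝ =>
          Qfun (Real.sqrt D * (Real.log (1 + g * P') - Rc * Real.log 2)))) P)
        = Real.sign (D * (Real.log (1 + g * P) - Rc * Real.log 2) + 1)) ∧
      (0 ≤ deriv (deriv (fun P' : ℝ =>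
          Qfun (Real.sqrt D * (Real.log (1 + g * P') - Rc * Real.log 2)))) P
        ↔ Rc ≤ Real.logb 2 (1 + g * P) + (1 / D) * Real.logb 2 (Real.exp 1)) :=
  second_deriv_sign_general D g Rc hD hg
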